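/- Let p be a trigonometric polynomial of degree at most 2 with p(θ) ≥ 0 for all θ and p(0) = 0. Then there exist constants c ≥ 0, φ ∈ [0, 2π), and s with 0 ≤ s ≤ 1 such that p(θ) = c(1 - cos θ)(1 - s·cos(θ - φ)) for all θ. -/

import Mathlib

/-!
Since `p ≥ 0` and `p 0 = 0`, the point `0` is a minimum of `p`, so both `p 0` and `p' 0` vanish.
These two linear conditions on the coefficients are exactly what lets `1 - cos θ` split off:
`p θ = (1 - cos θ) q θ` with `q θ = a - b cos θ - d sin θ`. The factor `q` is nonnegative off the
countable set `{cos θ = 1}`, hence everywhere by continuity, and writing `(b, d)` in polar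
coordinates `r (cos φ, sin φ)` gives `q θ = a - r cos (θ - φ)`; evaluating at `φ` shows `r ≤ a`,
so `c = a` and `s = r / a` work.
-/

open Real

lemma exists_polar_mem_Ico (x y : ℝ) :
    ∃ r, 0 ≤ r ∧ ∃ φ ∈ Set.Ico 0 (2 * π), x = r * cos φ ∧ y = r * sin φ := by
  set z : ℂ := ⟨x, y⟩
  set φ := toIcoMod two_pi_pos 0 z.arg
  obtain ⟨k, hk⟩ : ∃ k : ℤ, φ = z.arg - k * (2 * π) :=
    ⟨_, (sub_sub_cancel _ _).symm.trans
      (congrArg _ (self_sub_toIcoMod_eq_mul two_pi_pos 0 z.arg))⟩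
  refine ⟨‖z‖, norm_nonneg z, φ, toIcoMod_mem_Ico' two_pi_pos z.arg, ?_, ?_⟩
  · rw [hk, cos_sub_int_mul_two_pi, Complex.norm_mul_cos_arg]
  · rw [hk, sin_sub_int_mul_two_pi, Complex.norm_mul_sin_arg]

lemma nonneg_of_one_sub_cos_mul_nonneg {q : ℝ → ℝ} (hq : Continuous q)
    (h : ∀ θ, 0 ≤ (1 - cos θ) * q θ) (θ : ℝ) : 0 ≤ q θ := by
  have hcount : {θ : ℝ | cos θ = 1}.Countable :=
    (Set.countable_range fun n : ℤ => n * (2 * π)).mono fun θ hθ => (cos_eq_one_iff θ).1 hθ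
  have hsub : {θ : ℝ | cos θ = 1}ᶜ ⊆ {θ | 0 ≤ q θ} := fun θ hθ =>
    nonneg_of_mul_nonneg_right (h θ) (sub_pos.2 ((cos_le_one θ).lt_of_ne hθ))
  exact (isClosed_le continuous_const hq).closure_subset_iff.2 hsub
    ((hcount.dense_compl ℝ).closure_eq ▸ Set.mem_univ θ)

lemma exists_eq_mul_one_sub_mul_cos_sub {a b d : ℝ}
    (h : ∀ θ, 0 ≤ a - b * cos θ - d * sin θ) :
    ∃ c, 0 ≤ c ∧ ∃ φ ∈ Set.Ico 0 (2 * π), ∃ s ∈ Set.Icc (0 : ℝ) 1,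
      ∀ θ, a - b * cos θ - d * sin θ = c * (1 - s * cos (θ - φ)) := by
  obtain ⟨r, hr, φ, hφ, rfl, rfl⟩ := exists_polar_mem_Ico b d
  have hq : ∀ θ, a - r * cos φ * cos θ - r * sin φ * sin θ = a - r * cos (θ - φ) := fun θ => by
    rw [cos_sub]; ring
  have hra : r ≤ a := by simpa [hq] using h φ
  have ha : 0 ≤ a := hr.trans hra
  refine ⟨a, ha, φ, hφ, r / a, ⟨div_nonneg hr ha, div_le_one_of_le₀ hra ha⟩, fun θ => ?_⟩
  rw [hq, mul_sub, mul_one, ← mul_assoc,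
    mul_div_cancel_of_imp' fun ha₀ => le_antisymm (ha₀ ▸ hra) hr]

noncomputable def trigPolyDegTwo (c₀ c₁ s₁ c₂ s₂ θ : ℝ) : ℝ :=
  c₀ + c₁ * cos θ + s₁ * sin θ + c₂ * cos (2 * θ) + s₂ * sin (2 * θ)

section
variable (c₀ c₁ s₁ c₂ s₂ : ℝ)

lemma hasDerivAt_trigPolyDegTwo (θ : ℝ) :
    HasDerivAt (trigPolyDegTwo c₀ c₁ s₁ c₂ s₂)
      (-c₁ * sin θ + s₁ * cos θ - 2 * c₂ * sin (2 * θ) + 2 * s₂ * cos (2 * θ)) θ := by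
  have h2 : HasDerivAt (fun θ : ℝ => 2 * θ) 2 θ := by simpa using (hasDerivAt_id θ).const_mul 2
  exact (((((hasDerivAt_const θ c₀).add ((hasDerivAt_cos θ).const_mul c₁)).add
    ((hasDerivAt_sin θ).const_mul s₁)).add (((hasDerivAt_cos _).comp θ h2).const_mul c₂)).add
    (((hasDerivAt_sin _).comp θ h2).const_mul s₂)).congr_deriv (by ring)

lemma trigPolyDegTwo_eq_one_sub_cos_mul (h₀ : c₀ + c₁ + c₂ = 0) (h₁ : s₁ + 2 * s₂ = 0) (θ : ℝ) :
    trigPolyDegTwo c₀ c₁ s₁ c₂ s₂ θ =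
      (1 - cos θ) * (-c₁ - 2 * c₂ - 2 * c₂ * cos θ - 2 * s₂ * sin θ) := by
  rw [trigPolyDegTwo, cos_two_mul, sin_two_mul]
  linear_combination h₀ + sin θ * h₁

end

theorem stmt4 (p : ℝ → ℝ)
    (hp : ∃ c0 c1 s1 c2 s2 : ℝ, ∀ θ : ℝ,
      p θ = c0 + c1 * Real.cos θ + s1 * Real.sin θ
        + c2 * Real.cos (2 * θ) + s2 * Real.sin (2 * θ))
    (hnn : ∀ θ : ℝ, 0 ≤ p θ) (h0 : p 0 = 0) :
    ∃ c : ℝ, 0 ≤ c ∧ ∃ φ ∈ Set.Ico (0 : ℝ) (2 * Real.pi), ∃ s ∈ Set.Icc (0 : ℝ) 1,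
      ∀ θ : ℝ, p θ = c * (1 - Real.cos θ) * (1 - s * Real.cos (θ - φ)) := by
  obtain ⟨c₀, c₁, s₁, c₂, s₂, hp⟩ := hp
  obtain rfl : p = trigPolyDegTwo c₀ c₁ s₁ c₂ s₂ := funext hp
  have hval : c₀ + c₁ + c₂ = 0 := by simpa [trigPolyDegTwo] using h0
  have hderiv : s₁ + 2 * s₂ = 0 := by
    have hmin : IsLocalMin (trigPolyDegTwo c₀ c₁ s₁ c₂ s₂) 0 :=
      .of_forall fun θ => h0.le.trans (hnn θ)
    simpa using hmin.hasDerivAt_eq_zero (hasDerivAt_trigPolyDegTwo c₀ c₁ s₁ c₂ s₂ 0)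
  have hfactor := trigPolyDegTwo_eq_one_sub_cos_mul c₀ c₁ s₁ c₂ s₂ hval hderiv
  have hq : ∀ θ, 0 ≤ -c₁ - 2 * c₂ - 2 * c₂ * cos θ - 2 * s₂ * sin θ :=
    nonneg_of_one_sub_cos_mul_nonneg (by fun_prop) fun θ => hfactor θ ▸ hnn θ
  obtain ⟨c, hc, φ, hφ, s, hs, hcos⟩ := exists_eq_mul_one_sub_mul_cos_sub hq
  exact ⟨c, hc, φ, hφ, s, hs, fun θ => by rw [hfactor, hcos]; ring⟩
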